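/- arXiv:0904.2448 — 3 statements merged into one kernel-verified Lean document; each statement's English description precedes it below -/
import Mathlib

section
/- Every level-1 network is 1-nested: if no biconnected subgraph of a rooted DAG contains more than one hybrid node, then no node is an intermediate node of reticulation cycles for two different hybrid nodes. -/
/-- An evolutionary network: a rooted directed acyclic graph. -/
structure EvoNet (V : Type*) where
  arc : V → V → Prop
  root : V
  acyclic : ∀ v : V, ¬ Relation.TransGen arc v v
  rooted : ∀ v : V, Relation.ReflTransGen arc root v

namespace EvoNet

variable {V : Type*}

/-- A hybrid node: in-degree at least 2. -/
def IsHybrid (N : EvoNet V) (v : V) : Prop :=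
  ∃ u w : V, u ≠ w ∧ N.arc u v ∧ N.arc w v

/-- A tree node: in-degree at most 1. -/
def IsTreeNode (N : EvoNet V) (v : V) : Prop := ¬ N.IsHybrid v

/-- A (directed) path, given as its nonempty list of nodes. -/
def IsPath (N : EvoNet V) (p : List V) : Prop := p ≠ [] ∧ p.Chain' N.arc

/-- The intermediate (non-endpoint) nodes of a path. -/
def interm (p : List V) : Set V := {x | x ∈ (p.drop 1).dropLast}

/-- A reticulation cycle for the hybrid node `hend`: a pair of internally
disjoint nontrivial paths with the same origin (the split node), both ending
in `hend`. -/
structure RetCycle (N : EvoNet V) where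
  hend : V
  p : List V
  q : List V
  isPath_p : N.IsPath p
  isPath_q : N.IsPath q
  len_p : 2 ≤ p.length
  len_q : 2 ≤ q.length
  same_origin : p.head? = q.head?
  last_p : p.getLast? = some hend
  last_q : q.getLast? = some hend
  hybrid : N.IsHybrid hend
  intDisjoint : ∀ x : V, x ∈ interm p → x ∉ interm q
  ne : p ≠ q

/-- The nodes of a reticulation cycle. -/
def RetCycle.nodes {N : EvoNet V} (c : RetCycle N) : Set V :=
  {x | x ∈ c.p ∨ x ∈ c.q}

/-- The arcs of a reticulation cycle. -/
def RetCycle.arcs {N : EvoNet V} (c : RetCycle N) : Set (V × V) :=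
  {e | e ∈ c.p.zip c.p.tail ∨ e ∈ c.q.zip c.q.tail}

/-- The intermediate nodes of a reticulation cycle. -/
def RetCycle.intermNodes {N : EvoNet V} (c : RetCycle N) : Set V :=
  interm c.p ∪ interm c.q

/-- `s` is the split node of the reticulation cycle `c`. -/
def RetCycle.SplitIs {N : EvoNet V} (c : RetCycle N) (s : V) : Prop :=
  c.p.head? = some s

/-- Two reticulation cycles are the same (as unordered pairs of merge paths). -/
def RetCycle.Equiv {N : EvoNet V} (c₁ c₂ : RetCycle N) : Prop :=
  (c₁.p = c₂.p ∧ c₁.q = c₂.q) ∨ (c₁.p = c₂.q ∧ c₁.q = c₂.p)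

/-- 1-nested: no node is intermediate in reticulation cycles for two
different hybrid nodes. -/
def OneNested (N : EvoNet V) : Prop :=
  ∀ c₁ c₂ : RetCycle N, c₁.hend ≠ c₂.hend →
    ∀ x : V, x ∈ c₁.intermNodes → x ∉ c₂.intermNodes

/-- Galled tree: distinct reticulation cycles have disjoint node sets. -/
def Galled (N : EvoNet V) : Prop :=
  ∀ c₁ c₂ : RetCycle N, ¬ c₁.Equiv c₂ → Disjoint c₁.nodes c₂.nodes

/-- Weakly galled tree: distinct reticulation cycles have disjoint arc sets. -/
def WeaklyGalled (N : EvoNet V) : Prop :=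
  ∀ c₁ c₂ : RetCycle N, ¬ c₁.Equiv c₂ → Disjoint c₁.arcs c₂.arcs

/-- 2-hybrid: every hybrid node has in-degree exactly 2. -/
def TwoHybrid (N : EvoNet V) : Prop :=
  ∀ v : V, N.IsHybrid v →
    ∃ u w : V, u ≠ w ∧ N.arc u v ∧ N.arc w v ∧ ∀ z : V, N.arc z v → z = u ∨ z = w

/-- Hybrid-1: every hybrid node has out-degree exactly 1. -/
def HybridOne (N : EvoNet V) : Prop :=
  ∀ v : V, N.IsHybrid v → ∃! w : V, N.arc v w

/-- Semibinary: hybrid nodes have in-degree 2 and out-degree 1. -/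
def Semibinary (N : EvoNet V) : Prop := N.TwoHybrid ∧ N.HybridOne

/-- Node of out-degree exactly 2. -/
def OutDegTwo (N : EvoNet V) (v : V) : Prop :=
  ∃ u w : V, u ≠ w ∧ N.arc v u ∧ N.arc v w ∧ ∀ z : V, N.arc v z → z = u ∨ z = w

/-- An internal (non-leaf) node. -/
def IsInternal (N : EvoNet V) (v : V) : Prop := ∃ w : V, N.arc v w

/-- Binary (fully resolved): semibinary and internal tree nodes have
out-degree 2. -/
def Binary (N : EvoNet V) : Prop :=
  N.Semibinary ∧ ∀ v : V, N.IsTreeNode v → N.IsInternal v → N.OutDegTwo v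

/-- Undirected adjacency induced by a set of arcs. -/
def uadj (A : Set (V × V)) (x y : V) : Prop := (x, y) ∈ A ∨ (y, x) ∈ A

/-- The vertices of a subgraph given by a set of arcs. -/
def everts (A : Set (V × V)) : Set V := {x | ∃ y : V, (x, y) ∈ A ∨ (y, x) ∈ A}

/-- Connectedness of the underlying undirected graph of a set of arcs. -/
def EConnected (A : Set (V × V)) : Prop :=
  ∀ x y : V, x ∈ everts A → y ∈ everts A → Relation.ReflTransGen (uadj A) x y

/-- Remove a node and all arcs incident to it. -/
def avoid (A : Set (V × V)) (v : V) : Set (V × V) :=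
  {e ∈ A | e.1 ≠ v ∧ e.2 ≠ v}

/-- A biconnected subgraph of a network: a set of arcs of the network whose
underlying undirected graph is connected and remains connected after the
removal of any single node (with all arcs incident to it). -/
def Biconnected (N : EvoNet V) (A : Set (V × V)) : Prop :=
  (∀ e ∈ A, N.arc e.1 e.2) ∧ EConnected A ∧ ∀ v : V, EConnected (avoid A v)

/-- Level-1: no biconnected subgraph contains more than one hybrid node. -/
def LevelOne (N : EvoNet V) : Prop :=
  ∀ A : Set (V × V), N.Biconnected A →
    ∀ h₁ h₂ : V, N.IsHybrid h₁ → N.IsHybrid h₂ →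
      h₁ ∈ everts A → h₂ ∈ everts A → h₁ = h₂

/-- `v` is a descendant of `u`. -/
def Desc (N : EvoNet V) (u v : V) : Prop := Relation.ReflTransGen N.arc u v

/-- `v` is a proper descendant of `u`. -/
def ProperDesc (N : EvoNet V) (u v : V) : Prop := Relation.TransGen N.arc u v

/-- `w` is a minimal common ancestor of `u` and `v`: a common ancestor that is
a proper ancestor of no other common ancestor of them. -/
def IsMCA (N : EvoNet V) (w u v : V) : Prop :=
  N.Desc w u ∧ N.Desc w v ∧
    ∀ z : V, N.Desc z u → N.Desc z v → ¬ N.ProperDesc w z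

end EvoNet

/-!
Let `x` be intermediate in reticulation cycles `C₁`, `C₂` for the hybrid nodes `h₁`, `h₂`, lying on
merge paths where it has the parents `u₁`, `u₂`. A reticulation cycle is a biconnected subgraph.
If `u₁ ≠ u₂`, then `x` is a second hybrid node in `C₁`, besides `h₁`. If `u₁ = u₂`, the cycles share
the arc `u₁x`, and after deleting any single node they still share a node (`x`, or `u₁` when `x` is
deleted), so `C₁ ∪ C₂` is a biconnected subgraph containing both `h₁` and `h₂`.
-/

namespace List

variable {α : Type*}

theorem isChain_iff_forall_mem_zip_tail {R : α → α → Prop} {l : List α} :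
    l.IsChain R ↔ ∀ e ∈ l.zip l.tail, R e.1 e.2 := by
  induction l using twoStepInduction <;> simp_all

end List

namespace EvoNet

open Relation List

variable {V : Type*}

theorem mem_interm_iff {p : List V} {x : V} :
    x ∈ interm p ↔ ∃ l₁ a b l₂, p = l₁ ++ a :: x :: b :: l₂ := by
  constructor
  · intro h
    rcases p with _ | ⟨c, p⟩
    · simp [interm] at h
    obtain ⟨m₁, m₂, hm⟩ := append_of_mem (show x ∈ p.dropLast by simpa [interm] using h)
    obtain ⟨l₁, a, hl₁⟩ : ∃ l₁ a, c :: m₁ = l₁ ++ [a] := by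
      simpa using (c :: m₁).eq_nil_or_concat.resolve_left (cons_ne_nil _ _)
    have hp : p ≠ [] := by rintro rfl; simp at hm
    refine ⟨l₁, a, (m₂ ++ [p.getLast hp]).head (by simp), (m₂ ++ [p.getLast hp]).tail, ?_⟩
    rw [cons_head_tail]
    conv_lhs => rw [← dropLast_append_getLast hp, hm]
    simpa using congrArg (· ++ x :: (m₂ ++ [p.getLast hp])) hl₁
  · rintro ⟨l₁, a, b, l₂, rfl⟩
    rcases l₁ with _ | ⟨c, m⟩ <;> simp [interm, dropLast_append_of_ne_nil]

theorem mem_interm_of_ne {p : List V} {s t x : V} (hs : p.head? = some s)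
    (ht : p.getLast? = some t) (hx : x ∈ p) (hxs : x ≠ s) (hxt : x ≠ t) : x ∈ interm p := by
  obtain ⟨l, rfl⟩ := head?_eq_some_iff.1 hs
  have hl : l ≠ [] := by rintro rfl; simp_all
  obtain ⟨l', rfl⟩ := getLast?_eq_some_iff.1 (by rwa [getLast?_cons_of_ne_nil hl] at ht)
  simp_all [interm]

theorem ne_of_transGen (N : EvoNet V) {a b : V} (h : TransGen N.arc a b) : a ≠ b := by
  rintro rfl
  exact N.acyclic a h

theorem nodup_of_isChain (N : EvoNet V) {p : List V} (hp : p.IsChain N.arc) : p.Nodup :=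
  (hp.imp fun _ _ => TransGen.single).pairwise.imp (N.ne_of_transGen ·)

instance (A : Set (V × V)) : Std.Symm (uadj A) := ⟨fun _ _ h => h.symm⟩

theorem uadj_mono {A B : Set (V × V)} (h : A ⊆ B) : uadj A ≤ uadj B :=
  fun _ _ => Or.imp (@h _) (@h _)

theorem everts_mono {A B : Set (V × V)} (h : A ⊆ B) : everts A ⊆ everts B := by
  rintro x ⟨y, hy | hy⟩
  exacts [⟨y, Or.inl (h hy)⟩, ⟨y, Or.inr (h hy)⟩]

theorem mem_everts_of_mem_everts_avoid {A : Set (V × V)} {v x : V}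
    (h : x ∈ everts (avoid A v)) : x ∈ everts A ∧ x ≠ v := by
  obtain ⟨y, h | h⟩ := h
  exacts [⟨⟨y, Or.inl h.1⟩, h.2.1⟩, ⟨⟨y, Or.inr h.1⟩, h.2.2⟩]

theorem avoid_union (A B : Set (V × V)) (v : V) :
    avoid (A ∪ B) v = avoid A v ∪ avoid B v :=
  Set.sep_union

theorem reflTransGen_uadj_of_isChain {A : Set (V × V)} {p : List V}
    (hp : p.IsChain fun a b => (a, b) ∈ A) {x y : V} (hx : x ∈ p) (hy : y ∈ p) :
    ReflTransGen (uadj A) x y := by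
  have hhead : ∀ z ∈ p, ReflTransGen (uadj A) (p.head (ne_nil_of_mem hx)) z :=
    hp.induction _ p (fun _ _ h hz => hz.tail (Or.inl h)) fun _ => .refl
  exact (symm (hhead x hx)).trans (hhead y hy)

theorem reflTransGen_uadj_avoid_of_not_mem {A : Set (V × V)} {p : List V}
    (hp : p.IsChain fun a b => (a, b) ∈ A) {v : V} (hv : v ∉ p) {x y : V} (hx : x ∈ p)
    (hy : y ∈ p) : ReflTransGen (uadj (avoid A v)) x y :=
  reflTransGen_uadj_of_isChain (hp.imp_of_mem_imp fun _ _ ha hb h =>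
    show _ ∈ avoid A v from ⟨h, ne_of_mem_of_not_mem ha hv, ne_of_mem_of_not_mem hb hv⟩) hx hy

theorem eq_of_reflTransGen_uadj_avoid {A : Set (V × V)} {v x : V}
    (h : ReflTransGen (uadj (avoid A v)) x v) : x = v := by
  induction h using ReflTransGen.head_induction_on with
  | refl => rfl
  | head hxy _ ih => subst ih; rcases hxy with h | h; exacts [absurd rfl h.2.2, absurd rfl h.2.1]

theorem reflTransGen_uadj_avoid_head_or_getLast {A : Set (V × V)} {p : List V}
    (hp : p.IsChain fun a b => (a, b) ∈ A) (hnd : p.Nodup) {s t v x : V}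
    (hs : p.head? = some s) (ht : p.getLast? = some t) (hx : x ∈ p) (hxv : x ≠ v) :
    ReflTransGen (uadj (avoid A v)) x s ∨ ReflTransGen (uadj (avoid A v)) x t := by
  by_cases hv : v ∈ p
  · obtain ⟨l₁, l₂, rfl⟩ := append_of_mem hv
    have hv' : v ∉ l₁ ∧ v ∉ l₂ := by simpa using (nodup_cons.1 (nodup_middle.1 hnd)).left
    rcases mem_append.1 hx with hx | hx
    · left
      have hs₁ : s ∈ l₁ :=
        mem_of_mem_head? (by rwa [head?_append_of_ne_nil _ (ne_nil_of_mem hx)] at hs)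
      exact reflTransGen_uadj_avoid_of_not_mem hp.left_of_append hv'.1 hx hs₁
    · right
      have hx : x ∈ l₂ := (mem_cons.1 hx).resolve_left hxv
      have ht₂ : t ∈ l₂ := mem_of_getLast? (by
        rwa [getLast?_append_of_ne_nil _ (cons_ne_nil _ _),
          getLast?_cons_of_ne_nil (ne_nil_of_mem hx)] at ht)
      exact reflTransGen_uadj_avoid_of_not_mem hp.right_of_append.tail hv'.2 hx ht₂
  · exact .inl (reflTransGen_uadj_avoid_of_not_mem hp hv hx (mem_of_mem_head? hs))

theorem EConnected.of_forall_reflTransGen {A : Set (V × V)} (t : V)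
    (h : ∀ z ∈ everts A, ReflTransGen (uadj A) z t) : EConnected A :=
  fun x y hx hy => (h x hx).trans (symm (h y hy))

theorem EConnected.union {A B : Set (V × V)} (hA : EConnected A) (hB : EConnected B) {w : V}
    (hwA : w ∈ everts A) (hwB : w ∈ everts B) : EConnected (A ∪ B) := by
  refine .of_forall_reflTransGen w fun z ⟨y, hz⟩ => ?_
  rcases hz with (hz | hz) | (hz | hz)
  · exact ReflTransGen.mono (uadj_mono Set.subset_union_left) _ _ (hA z w ⟨y, .inl hz⟩ hwA)
  · exact ReflTransGen.mono (uadj_mono Set.subset_union_right) _ _ (hB z w ⟨y, .inl hz⟩ hwB)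
  · exact ReflTransGen.mono (uadj_mono Set.subset_union_left) _ _ (hA z w ⟨y, .inr hz⟩ hwA)
  · exact ReflTransGen.mono (uadj_mono Set.subset_union_right) _ _ (hB z w ⟨y, .inr hz⟩ hwB)

theorem Biconnected.union {N : EvoNet V} {A B : Set (V × V)} (hA : N.Biconnected A)
    (hB : N.Biconnected B)
    (hshare : ∀ v, ∃ w, w ∈ everts (avoid A v) ∧ w ∈ everts (avoid B v)) :
    N.Biconnected (A ∪ B) := by
  refine ⟨fun e he => he.elim (hA.1 e) (hB.1 e), fun x y hx hy => ?_, fun v => ?_⟩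
  · obtain ⟨w, hwA, hwB⟩ := hshare x
    exact hA.2.1.union hB.2.1 (mem_everts_of_mem_everts_avoid hwA).1
      (mem_everts_of_mem_everts_avoid hwB).1 x y hx hy
  · obtain ⟨w, hwA, hwB⟩ := hshare v
    rw [avoid_union]
    exact (hA.2.2 v).union (hB.2.2 v) hwA hwB

namespace RetCycle

variable {N : EvoNet V} (c : RetCycle N)

def swap : RetCycle N where
  hend := c.hend
  p := c.q
  q := c.p
  isPath_p := c.isPath_q
  isPath_q := c.isPath_p
  len_p := c.len_q
  len_q := c.len_p
  same_origin := c.same_origin.symm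
  last_p := c.last_q
  last_q := c.last_p
  hybrid := c.hybrid
  intDisjoint x hq hp := c.intDisjoint x hp hq
  ne := c.ne.symm

theorem exists_mem_interm_p {x : V} (hx : x ∈ c.intermNodes) :
    ∃ c' : RetCycle N, c'.hend = c.hend ∧ x ∈ interm c'.p := by
  rcases hx with hx | hx
  exacts [⟨c, rfl, hx⟩, ⟨c.swap, rfl, hx⟩]

theorem isChain_p : c.p.IsChain fun a b => (a, b) ∈ c.arcs :=
  isChain_iff_forall_mem_zip_tail.2 fun _ => .inl

theorem isChain_q : c.q.IsChain fun a b => (a, b) ∈ c.arcs :=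
  isChain_iff_forall_mem_zip_tail.2 fun _ => .inr

theorem arc_of_mem_arcs {a b : V} (h : (a, b) ∈ c.arcs) : N.arc a b := by
  rcases h with h | h
  exacts [isChain_iff_forall_mem_zip_tail.1 c.isPath_p.2 _ h,
    isChain_iff_forall_mem_zip_tail.1 c.isPath_q.2 _ h]

theorem mem_arcs_of_p_eq {l₁ l₂ : List V} {a b : V} (hp : c.p = l₁ ++ a :: b :: l₂) :
    (a, b) ∈ c.arcs :=
  isChain_iff_forall_rel_of_append_cons_cons.1 c.isChain_p hp

theorem nodup_p : c.p.Nodup := nodup_of_isChain N c.isPath_p.2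

theorem nodup_q : c.q.Nodup := nodup_of_isChain N c.isPath_q.2

theorem mem_nodes_of_mem_everts {x : V} (hx : x ∈ everts c.arcs) : x ∈ c.nodes := by
  obtain ⟨y, (h | h) | (h | h)⟩ := hx
  · exact .inl (of_mem_zip h).1
  · exact .inr (of_mem_zip h).1
  · exact .inl (mem_of_mem_tail (of_mem_zip h).2)
  · exact .inr (mem_of_mem_tail (of_mem_zip h).2)

theorem hend_mem_everts : c.hend ∈ everts c.arcs := by
  obtain ⟨l, hl⟩ := getLast?_eq_some_iff.1 c.last_p
  obtain ⟨l', a, rfl⟩ : ∃ l' a, l = l' ++ [a] := by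
    have := c.len_p
    simpa [hl] using l.eq_nil_or_concat.resolve_left (by rintro rfl; simp_all)
  exact ⟨a, .inr (c.mem_arcs_of_p_eq (l₁ := l') (l₂ := []) (by simp [hl]))⟩

theorem ne_hend_of_mem_interm_p {x : V} (hx : x ∈ interm c.p) : x ≠ c.hend := by
  intro hxh
  obtain ⟨l₁, a, b, l₂, hp⟩ := mem_interm_iff.1 hx
  have hnd : (x :: b :: l₂).Nodup :=
    c.nodup_p.sublist (hp ▸ (sublist_cons_self _ _).trans (sublist_append_right _ _))
  have hlast := c.last_p
  rw [hp, getLast?_append_of_ne_nil _ (cons_ne_nil _ _), getLast?_cons_cons] at hlast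
  exact (nodup_cons.1 hnd).1 (hxh ▸ mem_of_getLast? hlast)

theorem econnected : EConnected c.arcs := by
  obtain ⟨s, hs⟩ : ∃ s, c.p.head? = some s := ⟨_, head?_eq_some_head c.isPath_p.1⟩
  refine .of_forall_reflTransGen s fun z hz => ?_
  rcases c.mem_nodes_of_mem_everts hz with hz | hz
  · exact reflTransGen_uadj_of_isChain c.isChain_p hz (mem_of_mem_head? hs)
  · exact reflTransGen_uadj_of_isChain c.isChain_q hz (mem_of_mem_head? (c.same_origin ▸ hs))

theorem econnected_avoid (v : V) : EConnected (avoid c.arcs v) := by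
  obtain ⟨s, hs⟩ : ∃ s, c.p.head? = some s := ⟨_, head?_eq_some_head c.isPath_p.1⟩
  have hs' : c.q.head? = some s := c.same_origin ▸ hs
  have hreach : ∀ z ∈ everts (avoid c.arcs v), ReflTransGen (uadj (avoid c.arcs v)) z s ∨
      ReflTransGen (uadj (avoid c.arcs v)) z c.hend := by
    intro z hz
    obtain ⟨hz, hzv⟩ := mem_everts_of_mem_everts_avoid hz
    rcases c.mem_nodes_of_mem_everts hz with hz | hz
    exacts [reflTransGen_uadj_avoid_head_or_getLast c.isChain_p c.nodup_p hs c.last_p hz hzv,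
      reflTransGen_uadj_avoid_head_or_getLast c.isChain_q c.nodup_q hs' c.last_q hz hzv]
  -- `v` is intermediate on at most one path, so the other one joins the two ends unless `v` is an
  -- end, and then nothing else reaches `v`.
  have hbridge : ReflTransGen (uadj (avoid c.arcs v)) s c.hend ∨ v = s ∨ v = c.hend := by
    by_cases hvp : v ∈ c.p
    · by_cases hvq : v ∈ c.q
      · by_contra! h
        exact c.intDisjoint v (mem_interm_of_ne hs c.last_p hvp h.2.1 h.2.2)
          (mem_interm_of_ne hs' c.last_q hvq h.2.1 h.2.2)
      · exact .inl (reflTransGen_uadj_avoid_of_not_mem c.isChain_q hvq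
          (mem_of_mem_head? hs') (mem_of_getLast? c.last_q))
    · exact .inl (reflTransGen_uadj_avoid_of_not_mem c.isChain_p hvp
        (mem_of_mem_head? hs) (mem_of_getLast? c.last_p))
  rcases hbridge with h | rfl | rfl
  · exact .of_forall_reflTransGen c.hend fun z hz => (hreach z hz).elim (·.trans h) id
  · exact .of_forall_reflTransGen c.hend fun z hz => (hreach z hz).resolve_left
      fun h => (mem_everts_of_mem_everts_avoid hz).2 (eq_of_reflTransGen_uadj_avoid h)
  · exact .of_forall_reflTransGen s fun z hz => (hreach z hz).resolve_right
      fun h => (mem_everts_of_mem_everts_avoid hz).2 (eq_of_reflTransGen_uadj_avoid h)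

theorem biconnected : N.Biconnected c.arcs :=
  ⟨fun _ => c.arc_of_mem_arcs, c.econnected, c.econnected_avoid⟩

theorem mem_everts_avoid_of_mem_interm_p {v x : V} (hx : x ∈ interm c.p) (hv : v ≠ x) :
    x ∈ everts (avoid c.arcs v) := by
  obtain ⟨l₁, u, b, l₂, hp⟩ := mem_interm_iff.1 hx
  have hux := c.mem_arcs_of_p_eq hp
  have hxb := c.mem_arcs_of_p_eq (l₁ := l₁ ++ [u]) (a := x) (b := b) (l₂ := l₂) (by simp [hp])
  by_cases hvu : v = u
  · subst hvu
    have hvb :=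
      N.ne_of_transGen (.tail (.single (c.arc_of_mem_arcs hux)) (c.arc_of_mem_arcs hxb))
    exact ⟨b, .inl ⟨hxb, hv.symm, hvb.symm⟩⟩
  · exact ⟨u, .inr ⟨hux, Ne.symm hvu, hv.symm⟩⟩

/-- The node preceding an intermediate node `x` of `c.p` keeps a neighbour other than `x`: its
predecessor on `c.p`, or, if it is the split node, its successor on `c.q`. -/
theorem mem_everts_avoid_of_p_eq {l₁ l₂ : List V} {u x b : V}
    (hp : c.p = l₁ ++ u :: x :: b :: l₂) : u ∈ everts (avoid c.arcs x) := by
  have hux := c.mem_arcs_of_p_eq hp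
  have hux_ne := N.ne_of_transGen (.single (c.arc_of_mem_arcs hux))
  rcases l₁.eq_nil_or_concat' with rfl | ⟨l, w, rfl⟩
  · obtain ⟨t, r, hq⟩ : ∃ t r, c.q = u :: t :: r := by
      have hq : c.q.head? = some u := by rw [← c.same_origin, hp]; rfl
      obtain ⟨m, hm⟩ := head?_eq_some_iff.1 hq
      have := c.len_q
      rcases m with _ | ⟨t, r⟩
      · simp_all
      · exact ⟨t, r, hm⟩
    have htx : t ≠ x := by
      rintro rfl
      rcases r with _ | ⟨b', r⟩
      · exact c.ne_hend_of_mem_interm_p (mem_interm_iff.2 ⟨[], u, b, l₂, hp⟩)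
          (Option.some.inj (by simpa [hq] using c.last_q))
      · exact c.intDisjoint t (mem_interm_iff.2 ⟨[], u, b, l₂, hp⟩)
          (mem_interm_iff.2 ⟨[], u, b', r, hq⟩)
    exact ⟨t, .inl ⟨isChain_iff_forall_rel_of_append_cons_cons.1 c.isChain_q (l₁ := []) hq,
      hux_ne, htx⟩⟩
  · have hwu := c.mem_arcs_of_p_eq (l₁ := l) (a := w) (b := u) (l₂ := x :: b :: l₂)
      (by simp [hp])
    have hwx :=
      N.ne_of_transGen (.tail (.single (c.arc_of_mem_arcs hwu)) (c.arc_of_mem_arcs hux))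
    exact ⟨w, .inr ⟨hwu, hwx, hux_ne⟩⟩

end RetCycle

theorem LevelOne.hend_eq_of_mem_interm_p {N : EvoNet V} (hL : N.LevelOne) {c₁ c₂ : RetCycle N}
    {x : V} (h₁ : x ∈ interm c₁.p) (h₂ : x ∈ interm c₂.p) : c₁.hend = c₂.hend := by
  obtain ⟨l₁, u₁, b₁, m₁, hp₁⟩ := mem_interm_iff.1 h₁
  obtain ⟨l₂, u₂, b₂, m₂, hp₂⟩ := mem_interm_iff.1 h₂
  by_cases hu : u₁ = u₂
  · subst hu
    have hshare : ∀ v, ∃ w, w ∈ everts (avoid c₁.arcs v) ∧ w ∈ everts (avoid c₂.arcs v) := by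
      intro v
      by_cases hv : v = x
      · subst hv
        exact ⟨u₁, c₁.mem_everts_avoid_of_p_eq hp₁, c₂.mem_everts_avoid_of_p_eq hp₂⟩
      · exact ⟨x, c₁.mem_everts_avoid_of_mem_interm_p h₁ hv,
          c₂.mem_everts_avoid_of_mem_interm_p h₂ hv⟩
    exact hL _ (c₁.biconnected.union c₂.biconnected hshare) _ _ c₁.hybrid c₂.hybrid
      (everts_mono Set.subset_union_left c₁.hend_mem_everts)
      (everts_mono Set.subset_union_right c₂.hend_mem_everts)
  · have hux₁ := c₁.mem_arcs_of_p_eq hp₁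
    have hx : N.IsHybrid x :=
      ⟨u₁, u₂, hu, c₁.arc_of_mem_arcs hux₁, c₂.arc_of_mem_arcs (c₂.mem_arcs_of_p_eq hp₂)⟩
    exact absurd (hL _ c₁.biconnected _ _ hx c₁.hybrid ⟨u₁, .inr hux₁⟩ c₁.hend_mem_everts)
      (c₁.ne_hend_of_mem_interm_p h₁)

end EvoNet

theorem levelOne_oneNested {V : Type*} (N : EvoNet V)
    (hL : N.LevelOne) : N.OneNested := by
  intro c₁ c₂ hne x hx₁ hx₂
  obtain ⟨c₁', h₁, hx₁'⟩ := c₁.exists_mem_interm_p hx₁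
  obtain ⟨c₂', h₂, hx₂'⟩ := c₂.exists_mem_interm_p hx₂
  exact hne (h₁ ▸ h₂ ▸ hL.hend_eq_of_mem_interm_p hx₁' hx₂')
end

section
/- In a 1-nested network, no reticulation cycle contains a hybrid node as an intermediate node. -/
/-! If a hybrid node `x` is intermediate on a merge path `s₀ ⋯ u x ⋯ h` of a reticulation cycle
for `h`, pick a second parent `w ≠ u` of `x`. Root paths to `u` and `w`, cut at their last common
node `s`, form a reticulation cycle `D` for `x`, and `x ≠ h` by acyclicity, so by 1-nestedness the
interior of `D` avoids that of the cycle for `h`. If `s ≠ u` and `u ≠ s₀`, the node `u` is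
intermediate in both cycles. Otherwise the cycle for `h` can be rerouted through `D` (along
`u ⋯ w → x` when `s = u`, or with the split moved up to `s` when `u = s₀`) so that it shares an
intermediate node with `D`. -/

open List Relation

namespace List

variable {α : Type*} {r : α → α → Prop}

theorem IsChain.append_of_getLast? {l₁ l₂ : List α} {b : α} (h₁ : l₁.IsChain r)
    (h₂ : (b :: l₂).IsChain r) (hb : l₁.getLast? = some b) : (l₁ ++ l₂).IsChain r :=
  h₁.append h₂.tail (by simpa [hb] using h₂.rel_head?)

theorem IsChain.transGen_of_mem : ∀ {a b : α} {l : List α}, (a :: l).IsChain r → b ∈ l →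
    TransGen r a b
  | _, _, c :: _, h, hb => by
    rcases mem_cons.1 hb with rfl | hb
    · exact .single h.rel
    · exact .head h.rel (h.tail.transGen_of_mem hb)

theorem exists_eq_append_cons_forall_not_mem {p : α → Prop} {l : List α} (h : ∃ a ∈ l, p a) :
    ∃ l₁ a l₂, l = l₁ ++ a :: l₂ ∧ p a ∧ ∀ b ∈ l₂, ¬ p b := by
  induction l using reverseRecOn with
  | nil => simp at h
  | append_singleton l a ih =>
    by_cases ha : p a
    · exact ⟨l, a, [], rfl, ha, by simp⟩
    · obtain ⟨l₁, b, l₂, rfl, hb, hl₂⟩ := ih (by simpa [ha] using h)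
      refine ⟨l₁, b, l₂ ++ [a], by simp, hb, fun c hc => ?_⟩
      rcases mem_append.1 hc with hc | hc
      · exact hl₂ c hc
      · exact (mem_singleton.1 hc) ▸ ha

theorem eq_or_mem_of_getLast?_cons {a b : α} {l : List α} (h : (a :: l).getLast? = some b) :
    l = [] ∧ b = a ∨ b ∈ l := by
  cases l with
  | nil => simp_all
  | cons c l => exact .inr (mem_of_getLast? (getLast?_cons_cons ▸ h))

theorem exists_eq_cons_append_singleton {l : List α} {b : α} (hl : 2 ≤ l.length)
    (hb : l.getLast? = some b) : ∃ a m, l = a :: (m ++ [b]) := by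
  match l, hl with
  | a :: t, hl =>
    obtain ⟨m, c, rfl⟩ := t.eq_nil_or_concat.resolve_left (by rintro rfl; simp at hl)
    rw [concat_eq_append, ← cons_append, getLast?_concat, Option.some_inj] at hb
    exact ⟨a, m, by rw [concat_eq_append, hb]⟩

end List

theorem Relation.ReflTransGen.exists_disjoint_isChain {α : Type*} {r : α → α → Prop} {a u w : α}
    (hu : ReflTransGen r a u) (hw : ReflTransGen r a w) :
    ∃ s lu lw, (s :: lu).IsChain r ∧ (s :: lu).getLast? = some u ∧
      (s :: lw).IsChain r ∧ (s :: lw).getLast? = some w ∧ ∀ z ∈ lu, z ∉ lw := by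
  obtain ⟨lu', hcu, hlu⟩ := exists_isChain_cons_of_relationReflTransGen hu
  obtain ⟨lw', hcw, hlw⟩ := exists_isChain_cons_of_relationReflTransGen hw
  obtain ⟨l₁, s, lu, hu_eq, hs, hlu_disj⟩ :=
    exists_eq_append_cons_forall_not_mem (p := (· ∈ a :: lw')) ⟨a, mem_cons_self, mem_cons_self⟩
  obtain ⟨l₂, lw, hw_eq⟩ := append_of_mem hs
  refine ⟨s, lu, lw, (hu_eq ▸ hcu).right_of_append, ?_, (hw_eq ▸ hcw).right_of_append, ?_, ?_⟩
  · rw [← getLast?_append_of_ne_nil l₁ (cons_ne_nil s lu), ← hu_eq,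
      getLast?_eq_some_getLast (cons_ne_nil _ _), hlu]
  · rw [← getLast?_append_of_ne_nil l₂ (cons_ne_nil s lw), ← hw_eq,
      getLast?_eq_some_getLast (cons_ne_nil _ _), hlw]
  · exact fun z hz hzw => hlu_disj z hz (hw_eq ▸ mem_append_right _ (mem_cons_of_mem _ hzw))

namespace EvoNet

variable {V : Type*} {N : EvoNet V}

theorem IsHybrid.exists_ne_arc {x : V} (hx : N.IsHybrid x) (u : V) : ∃ w, w ≠ u ∧ N.arc w x := by
  obtain ⟨a, b, hab, ha, hb⟩ := hx
  by_cases hau : a = u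
  · exact ⟨b, hau ▸ hab.symm, hb⟩
  · exact ⟨a, hau, ha⟩

@[simp]
theorem interm_cons_append_singleton (s h : V) (m : List V) :
    interm (s :: (m ++ [h])) = {z | z ∈ m} := by
  simp [interm]

def RetCycle.ofInteriors {s h : V} {m₁ m₂ : List V}
    (hc₁ : (s :: (m₁ ++ [h])).IsChain N.arc) (hc₂ : (s :: (m₂ ++ [h])).IsChain N.arc)
    (hh : N.IsHybrid h) (hdisj : ∀ z ∈ m₁, z ∉ m₂) (hne : m₁ ≠ m₂) : RetCycle N where
  hend := h
  p := s :: (m₁ ++ [h])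
  q := s :: (m₂ ++ [h])
  isPath_p := ⟨cons_ne_nil _ _, hc₁⟩
  isPath_q := ⟨cons_ne_nil _ _, hc₂⟩
  len_p := by simp
  len_q := by simp
  same_origin := rfl
  last_p := by rw [← cons_append, getLast?_concat]
  last_q := by rw [← cons_append, getLast?_concat]
  hybrid := hh
  intDisjoint := by simpa using hdisj
  ne := by simpa using hne

@[simp]
theorem RetCycle.intermNodes_ofInteriors {s h : V} {m₁ m₂ : List V}
    (hc₁ : (s :: (m₁ ++ [h])).IsChain N.arc) (hc₂ : (s :: (m₂ ++ [h])).IsChain N.arc)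
    (hh : N.IsHybrid h) (hdisj : ∀ z ∈ m₁, z ∉ m₂) (hne : m₁ ≠ m₂) :
    (RetCycle.ofInteriors hc₁ hc₂ hh hdisj hne).intermNodes = {z | z ∈ m₁ ∨ z ∈ m₂} := by
  simp [RetCycle.intermNodes, RetCycle.ofInteriors, Set.union_def]

theorem RetCycle.exists_eq_cons_append_singleton (c : RetCycle N) :
    ∃ s m n, c.p = s :: (m ++ [c.hend]) ∧ c.q = s :: (n ++ [c.hend]) := by
  obtain ⟨s, m, hp⟩ := List.exists_eq_cons_append_singleton c.len_p c.last_p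
  obtain ⟨s', n, hq⟩ := List.exists_eq_cons_append_singleton c.len_q c.last_q
  have hs : s = s' := by simpa [hp, hq] using c.same_origin
  exact ⟨s, m, n, hp, hs ▸ hq⟩

/-- The merge path `s₀ ⋯ u x ⋯ h` is rerouted along `u :: (Q ++ [x])` instead of the arc `u → x`. -/
theorem RetCycle.exists_reroute {s₀ u x h : V} {A B Q n : List V}
    (hp : (s₀ :: (A ++ x :: B ++ [h])).IsChain N.arc) (hn : (s₀ :: (n ++ [h])).IsChain N.arc)
    (hh : N.IsHybrid h) (hdisj : ∀ z ∈ A ++ x :: B, z ∉ n)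
    (hu : (s₀ :: A).getLast? = some u) (hQ : (u :: (Q ++ [x])).IsChain N.arc)
    (hQn : ∀ z ∈ Q, z ∉ n) :
    ∃ c : RetCycle N, c.hend = h ∧ ∀ z ∈ Q, z ∈ c.intermNodes := by
  have hA : (s₀ :: A).IsChain N.arc := hp.prefix ⟨x :: B ++ [h], by simp⟩
  have hxB : (x :: (B ++ [h])).IsChain N.arc := hp.suffix ⟨s₀ :: A, by simp⟩
  have hc : (s₀ :: (A ++ Q ++ x :: B ++ [h])).IsChain N.arc := by
    simpa using (hA.append_of_getLast? hQ hu).append_of_getLast? hxB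
      (by rw [getLast?_append_of_ne_nil _ (by simp), getLast?_concat])
  have hdisj' : ∀ z ∈ A ++ Q ++ x :: B, z ∉ n := by
    intro z hz
    rcases mem_append.1 hz with hz | hz
    · rcases mem_append.1 hz with hz | hz
      · exact hdisj z (mem_append_left _ hz)
      · exact hQn z hz
    · exact hdisj z (mem_append_right _ hz)
  have hx : x ∈ A ++ Q ++ x :: B := by simp
  refine ⟨.ofInteriors hc hn hh hdisj' (fun hEq => hdisj' x hx (hEq ▸ hx)), rfl, ?_⟩
  intro z hz
  simp [hz]

/-- The merge paths `s₀ x ⋯ h` and `s₀ ⋯ h` are replaced by `s ⋯ x ⋯ h` and `s ⋯ s₀ ⋯ h`. -/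
theorem RetCycle.exists_resplit {s s₀ x h : V} {B P Q n : List V}
    (hp : (s₀ :: (x :: B ++ [h])).IsChain N.arc) (hn : (s₀ :: (n ++ [h])).IsChain N.arc)
    (hh : N.IsHybrid h) (hdisj : ∀ z ∈ x :: B, z ∉ n)
    (hP : (s :: P).IsChain N.arc) (hPs₀ : (s :: P).getLast? = some s₀)
    (hQ : (s :: (Q ++ [x])).IsChain N.arc) (hPQ : ∀ z ∈ P, z ∉ Q)
    (hPx : ∀ z ∈ P, z ∉ x :: B) (hQn : ∀ z ∈ Q, z ∉ n) :
    ∃ c : RetCycle N, c.hend = h ∧ ∀ z ∈ P, z ∈ c.intermNodes := by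
  have hc₁ : (s :: (Q ++ x :: B ++ [h])).IsChain N.arc := by
    simpa using hQ.append_of_getLast? hp.tail (by rw [← cons_append, getLast?_concat])
  have hc₂ : (s :: (P ++ n ++ [h])).IsChain N.arc := by
    simpa using hP.append_of_getLast? hn hPs₀
  have hdisj' : ∀ z ∈ Q ++ x :: B, z ∉ P ++ n := by
    intro z hz hz'
    rcases mem_append.1 hz with hz | hz <;> rcases mem_append.1 hz' with hz' | hz'
    · exact hPQ z hz' hz
    · exact hQn z hz hz'
    · exact hPx z hz' hz
    · exact hdisj z hz hz'
  have hx : x ∈ Q ++ x :: B := by simp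
  refine ⟨.ofInteriors hc₁ hc₂ hh hdisj' (fun hEq => hdisj' x hx (hEq ▸ hx)), rfl, ?_⟩
  intro z hz
  simp [hz]

theorem OneNested.not_isHybrid_of_mem_interior (h1n : N.OneNested) {s₀ h x : V} {m n : List V}
    (hm : (s₀ :: (m ++ [h])).IsChain N.arc) (hn : (s₀ :: (n ++ [h])).IsChain N.arc)
    (hh : N.IsHybrid h) (hdisj : ∀ z ∈ m, z ∉ n) (hxm : x ∈ m) : ¬ N.IsHybrid x := by
  intro hx
  obtain ⟨A, B, rfl⟩ := append_of_mem hxm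
  have hm' : ((s₀ :: A) ++ x :: (B ++ [h])).IsChain N.arc := by simpa using hm
  have hxh : x ≠ h := fun hxh =>
    N.acyclic x (hxh ▸ hm'.right_of_append.transGen_of_mem (by simp))
  obtain ⟨u, hu, hux⟩ : ∃ u, (s₀ :: A).getLast? = some u ∧ N.arc u x :=
    ⟨_, getLast?_eq_some_getLast (cons_ne_nil _ _),
      hm'.rel_getLast_head_of_append (cons_ne_nil _ _) (cons_ne_nil _ _)⟩
  obtain ⟨w, hwu, hwx⟩ := hx.exists_ne_arc u
  obtain ⟨s, P, Q, hP, hPu, hQ, hQw, hPQ⟩ := (N.rooted u).exists_disjoint_isChain (N.rooted w)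
  have hPx : (s :: (P ++ [x])).IsChain N.arc := by
    simpa using hP.append_of_getLast? (isChain_pair.2 hux) hPu
  have hQx : (s :: (Q ++ [x])).IsChain N.arc := by
    simpa using hQ.append_of_getLast? (isChain_pair.2 hwx) hQw
  have hPQne : P ≠ Q := by
    rintro rfl
    exact hwu (Option.some_inj.1 (hQw.symm.trans hPu))
  let D := RetCycle.ofInteriors hPx hQx hx hPQ hPQne
  have hDc : ∀ z, z ∈ P ∨ z ∈ Q → z ∈ A ++ x :: B ∨ z ∈ n → False := fun z hzD hzc =>
    h1n D (.ofInteriors hm hn hh hdisj fun hEq => hdisj x hxm (hEq ▸ hxm)) hxh z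
      (by simpa [D] using hzD) (by simpa using hzc)
  rcases eq_or_mem_of_getLast?_cons hPu with ⟨rfl, rfl⟩ | huP
  · have hwQ : w ∈ Q := (eq_or_mem_of_getLast?_cons hQw).resolve_left fun h => hwu h.2
    obtain ⟨c, rfl, hQc⟩ := RetCycle.exists_reroute hm hn hh hdisj hu hQx
      fun z hz hzn => hDc z (.inr hz) (.inr hzn)
    exact h1n D c hxh w (by simp [D, hwQ]) (hQc w hwQ)
  rcases eq_or_mem_of_getLast?_cons hu with ⟨rfl, rfl⟩ | huA
  · obtain ⟨c, rfl, hPc⟩ := RetCycle.exists_resplit (by simpa using hm) hn hh hdisj hP hPu hQx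
      hPQ (fun z hz hzx => hDc z (.inl hz) (.inl (by simpa using hzx)))
      fun z hz hzn => hDc z (.inr hz) (.inr hzn)
    exact h1n D c hxh u (by simp [D, huP]) (hPc u huP)
  · exact hDc u (.inl huP) (.inl (mem_append_left _ huA))

end EvoNet

theorem oneNested_no_intermediate_hybrid {V : Type*} (N : EvoNet V)
    (h1n : N.OneNested) :
    ∀ c : EvoNet.RetCycle N, ∀ x : V, N.IsHybrid x → x ∉ c.intermNodes := by
  intro c x hx hxc
  obtain ⟨s, m, n, hp, hq⟩ := c.exists_eq_cons_append_singleton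
  have hpc : (s :: (m ++ [c.hend])).IsChain N.arc := hp ▸ c.isPath_p.2
  have hqc : (s :: (n ++ [c.hend])).IsChain N.arc := hq ▸ c.isPath_q.2
  have hdisj : ∀ z ∈ m, z ∉ n := by simpa [hp, hq] using c.intDisjoint
  simp only [EvoNet.RetCycle.intermNodes, hp, hq, EvoNet.interm_cons_append_singleton,
    Set.mem_union, Set.mem_ofPred_eq] at hxc
  rcases hxc with hxm | hxn
  · exact h1n.not_isHybrid_of_mem_interior hpc hqc c.hybrid hdisj hxm hx
  · exact h1n.not_isHybrid_of_mem_interior hqc hpc c.hybrid (fun z hn hm => hdisj z hm hn) hxn hx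
end

section
/- In a rooted DAG, if h is a hybrid node with two distinct proper ancestors u and v such that some paths u⇝h and v⇝h share only the node h, and there is no minimal common ancestor of u and v equal to u or v, then there exists a reticulation cycle for h containing both u and v. -/
/-!
Since an ancestor of the other would itself be a minimal common ancestor, `u` and `v` are
incomparable. Extend `p` and `q` backwards to paths `P` and `Q` from the root, and let `s` be the
last node of `P` before `u` that lies on `Q`. Incomparability keeps `s` off `q`, keeps `u` off `Q`,
and keeps `p` away from `Q` except at `h`; so the parts of `P` and `Q` from `s` on are two paths
to `h` with disjoint interiors, one through `u` and the other through `v`.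
-/

namespace List

variable {α : Type*} {r : α → α → Prop}

theorem IsChain.pairwise_transGen {l : List α} (hl : l.IsChain r) :
    l.Pairwise (Relation.TransGen r) :=
  (hl.imp fun _ _ => Relation.TransGen.single).pairwise

theorem IsChain.reflTransGen_of_head?_eq {l : List α} {a x : α} (hl : l.IsChain r)
    (ha : l.head? = some a) (hx : x ∈ l) : Relation.ReflTransGen r a x := by
  obtain ⟨t, rfl⟩ : ∃ t, l = a :: t := head?_eq_some_iff.1 ha
  rcases mem_cons.1 hx with rfl | hxt
  · exact .refl
  · exact (rel_of_pairwise_cons hl.pairwise_transGen hxt).to_reflTransGen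

theorem IsChain.transGen_of_mem_dropLast {l : List α} {b x : α} (hl : l.IsChain r)
    (hb : l.getLast? = some b) (hx : x ∈ l.dropLast) : Relation.TransGen r x b := by
  have hl' := hl.pairwise_transGen
  rw [← dropLast_append_getLast? b hb, pairwise_append] at hl'
  exact hl'.2.2 x hx b (mem_singleton_self b)

theorem exists_isChain_append_of_reflTransGen {a b : α} (hab : Relation.ReflTransGen r a b)
    {l : List α} (hl : l.IsChain r) (hb : l.head? = some b) :
    ∃ A, (A ++ l).IsChain r ∧ (A ++ l).head? = some a ∧ ∀ x ∈ A, Relation.ReflTransGen r x b := by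
  induction hab using Relation.ReflTransGen.head_induction_on with
  | refl => exact ⟨[], hl, hb, by simp⟩
  | head hac hcb ih =>
    obtain ⟨A, hAc, hAh, hA⟩ := ih
    refine ⟨_ :: A, hAc.cons fun y hy => ?_, rfl, forall_mem_cons.2 ⟨.head hac hcb, hA⟩⟩
    rw [hAh, Option.mem_some_iff] at hy
    exact hy ▸ hac

theorem exists_eq_append_cons_of_last_mem {p : α → Prop} :
    ∀ {l : List α}, (∃ x ∈ l, p x) → ∃ l₁ s l₂, l = l₁ ++ s :: l₂ ∧ p s ∧ ∀ x ∈ l₂, ¬ p x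
  | [], ⟨_, hx, _⟩ => absurd hx not_mem_nil
  | a :: t, hex => by
    by_cases ht : ∃ x ∈ t, p x
    · obtain ⟨l₁, s, l₂, rfl, hs, hl₂⟩ := exists_eq_append_cons_of_last_mem ht
      exact ⟨a :: l₁, s, l₂, rfl, hs, hl₂⟩
    · obtain ⟨x, hx, hpx⟩ := hex
      have hxa : x = a := (mem_cons.1 hx).resolve_right fun hxt => ht ⟨x, hxt, hpx⟩
      simp only [not_exists, not_and] at ht
      exact ⟨[], a, t, rfl, hxa ▸ hpx, ht⟩

end List

namespace EvoNet

variable {V : Type*} {N : EvoNet V}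

theorem isMCA_left_of_desc {u v : V} (huv : N.Desc u v) : N.IsMCA u u v :=
  ⟨.refl, huv, fun _ hzu _ huz => N.acyclic u (huz.trans_left hzu)⟩

theorem isMCA_right_of_desc {u v : V} (hvu : N.Desc v u) : N.IsMCA v u v :=
  ⟨hvu, .refl, fun _ _ hzv hvz => N.acyclic v (hvz.trans_left hzv)⟩

theorem IsPath.getLast_not_mem_dropLast {p : List V} {h : V} (hp : N.IsPath p)
    (hh : p.getLast? = some h) : h ∉ p.dropLast :=
  fun hmem => N.acyclic h (hp.2.transGen_of_mem_dropLast hh hmem)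

theorem exists_retCycle_of_split {h s : V} (hh : N.IsHybrid h) {A B p q : List V}
    (hP : (s :: A ++ p).IsChain N.arc) (hQ : (s :: B ++ q).IsChain N.arc)
    (hp : p ≠ []) (hq : q ≠ []) (hpl : p.getLast? = some h) (hql : q.getLast? = some h)
    (hdisj : ∀ x ∈ A ++ p.dropLast, x ∉ B ++ q) (hne : s :: A ++ p ≠ s :: B ++ q) :
    ∃ c : RetCycle N, c.hend = h ∧ c.p = s :: A ++ p ∧ c.q = s :: B ++ q := by
  have hint_p : interm (s :: A ++ p) ⊆ {x | x ∈ A ++ p.dropLast} := fun x hx => by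
    simpa [interm, List.dropLast_append_of_ne_nil hp] using hx
  have hint_q : interm (s :: B ++ q) ⊆ {x | x ∈ B ++ q} := fun x hx =>
    List.dropLast_subset _ (by simpa [interm] using hx)
  refine ⟨{ hend := h, p := s :: A ++ p, q := s :: B ++ q,
            isPath_p := ⟨List.cons_ne_nil _ _, hP⟩
            isPath_q := ⟨List.cons_ne_nil _ _, hQ⟩
            len_p := by simp [Nat.one_le_iff_ne_zero, hp]
            len_q := by simp [Nat.one_le_iff_ne_zero, hq]
            same_origin := rfl
            last_p := by rw [List.getLast?_append_of_ne_nil _ hp, hpl]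
            last_q := by rw [List.getLast?_append_of_ne_nil _ hq, hql]
            hybrid := hh
            intDisjoint := fun x hxp hxq => hdisj x (hint_p hxp) (hint_q hxq)
            ne := hne }, rfl, rfl, rfl⟩

theorem exists_retCycle_of_not_desc {h u v : V} (hh : N.IsHybrid h)
    {p q : List V} (hp : N.IsPath p) (hq : N.IsPath q)
    (hop : p.head? = some u) (hoq : q.head? = some v)
    (hep : p.getLast? = some h) (heq : q.getLast? = some h)
    (hshare : ∀ x ∈ p, x ∈ q → x = h) (hnuv : ¬ N.Desc u v) (hnvu : ¬ N.Desc v u) :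
    ∃ c : RetCycle N, c.hend = h ∧ u ∈ c.nodes ∧ v ∈ c.nodes := by
  obtain ⟨A, hAc, hAh, hA⟩ := List.exists_isChain_append_of_reflTransGen (N.rooted u) hp.2 hop
  obtain ⟨B, hBc, hBh, hB⟩ := List.exists_isChain_append_of_reflTransGen (N.rooted v) hq.2 hoq
  have hpu : ∀ x ∈ p, N.Desc u x := fun _ => hp.2.reflTransGen_of_head?_eq hop
  have hqv : ∀ x ∈ q, N.Desc v x := fun _ => hq.2.reflTransGen_of_head?_eq hoq
  have hroot : N.root ∈ A := (List.mem_append.1 (List.mem_of_mem_head? hAh)).resolve_right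
    fun hr => hnuv ((hpu _ hr).trans (N.rooted v))
  obtain ⟨A₁, s, A₂, rfl, hsQ, hA₂⟩ :=
    List.exists_eq_append_cons_of_last_mem ⟨N.root, hroot, List.mem_of_mem_head? hBh⟩
  have hsB : s ∈ B := (List.mem_append.1 hsQ).resolve_right
    fun hsq => hnvu ((hqv s hsq).trans (hA s (List.mem_append_right A₁ List.mem_cons_self)))
  obtain ⟨B₁, B₂, rfl⟩ := List.append_of_mem hsB
  have hQs : s :: B₂ ++ q <:+ B₁ ++ s :: B₂ ++ q := ⟨B₁, by simp⟩
  have hdisj : ∀ x ∈ A₂ ++ p.dropLast, x ∉ B₂ ++ q := by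
    intro x hx hxQ
    rcases List.mem_append.1 hx with hxA | hxp
    · exact hA₂ x hxA (hQs.subset (List.mem_cons_of_mem s hxQ))
    · rcases List.mem_append.1 hxQ with hxB | hxq
      · exact hnuv ((hpu x (List.dropLast_subset _ hxp)).trans
          (hB x (List.mem_append_right B₁ (List.mem_cons_of_mem s hxB))))
      · exact hp.getLast_not_mem_dropLast hep (hshare x (List.dropLast_subset _ hxp) hxq ▸ hxp)
  have hu : u ∈ s :: A₂ ++ p := List.mem_append_right _ (List.mem_of_mem_head? hop)
  have hu' : u ∉ s :: B₂ ++ q := by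
    intro hu'
    rcases List.mem_append.1 hu' with huB | huq
    · exact hnuv (hB u (List.mem_append_right B₁ huB))
    · exact hnvu (hqv u huq)
  obtain ⟨c, hc, hcp, hcq⟩ := exists_retCycle_of_split hh (hAc.suffix ⟨A₁, by simp⟩)
    (hBc.suffix hQs) hp.1 hq.1 hep heq hdisj (fun hPQ => hu' (hPQ ▸ hu))
  exact ⟨c, hc, Or.inl (hcp ▸ hu),
    Or.inr (hcq ▸ List.mem_append_right _ (List.mem_of_mem_head? hoq))⟩

end EvoNet

theorem mca_gives_reticulation_cycle_general {V : Type*} (N : EvoNet V)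
    (h u v : V) (hh : N.IsHybrid h)
    (p q : List V) (hp : N.IsPath p) (hq : N.IsPath q)
    (hop : p.head? = some u) (hoq : q.head? = some v)
    (hep : p.getLast? = some h) (heq : q.getLast? = some h)
    (hshare : ∀ x : V, x ∈ p → x ∈ q → x = h)
    (hmca : ∀ w : V, N.IsMCA w u v → w ≠ u ∧ w ≠ v) :
    ∃ c : EvoNet.RetCycle N, c.hend = h ∧ u ∈ c.nodes ∧ v ∈ c.nodes :=
  N.exists_retCycle_of_not_desc hh hp hq hop hoq hep heq hshare
    (fun hd => (hmca u (EvoNet.isMCA_left_of_desc hd)).1 rfl)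
    (fun hd => (hmca v (EvoNet.isMCA_right_of_desc hd)).2 rfl)

theorem mca_gives_reticulation_cycle {V : Type*} (N : EvoNet V)
    (h u v : V) (hh : N.IsHybrid h) (huv : u ≠ v)
    (p q : List V) (hp : N.IsPath p) (hq : N.IsPath q)
    (hlp : 2 ≤ p.length) (hlq : 2 ≤ q.length)
    (hop : p.head? = some u) (hoq : q.head? = some v)
    (hep : p.getLast? = some h) (heq : q.getLast? = some h)
    (hshare : ∀ x : V, x ∈ p → x ∈ q → x = h)
    (hmca : ∀ w : V, N.IsMCA w u v → w ≠ u ∧ w ≠ v) :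
    ∃ c : EvoNet.RetCycle N, c.hend = h ∧ u ∈ c.nodes ∧ v ∈ c.nodes :=
  mca_gives_reticulation_cycle_general N h u v hh p q hp hq hop hoq hep heq hshare hmca
end
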